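/- In the 3-queue path-graph model, let the system Q evolve under the policy π̃_IQ (S(t) = (1,0,1) if Q_1(t) > 0 and Q_3(t) > 0; otherwise S(t) = (0,1,0) if Q_2(t) > 0; otherwise S(t) = (1,0,1)), and let Q′ be a system driven by the same arrival process, with Q′(0) = Q(0) = 0, under an arbitrary causal activation process S′: each S′(t) is {0,1}^3-valued, measurable with respect to σ(U, A_i(s) : 1 ≤ i ≤ 3, s ≤ t) for some randomization variable U independent of the arrival process, and satisfies S′_1(t)+S′_2(t) ≤ 1 and S′_2(t)+S′_3(t) ≤ 1. Then for every t ≥ 0 the total backlog under π̃_IQ is stochastically smaller: for every s ∈ ℝ, P(Q_1(t)+Q_2(t)+Q_3(t) > s) ≤ P(Q′_1(t)+Q′_2(t)+Q′_3(t) > s). Thus π̃_IQ is the uniformly delay-optimal policy for the 3-queue path graph. -/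

import Mathlib

open MeasureTheory ProbabilityTheory Filter
open scoped ENNReal

/-- The inner-queue-priority MSM policy π̃_IQ for the 3-queue path graph. -/
def piIQtilde (q : Fin 3 → ℕ) : Fin 3 → ℕ :=
  if 0 < q 0 ∧ 0 < q 2 then ![1, 0, 1]
  else if 0 < q 1 then ![0, 1, 0]
  else ![1, 0, 1]

/-! The comparison is pathwise: couple both systems through the same arrivals and show by
induction on time that four simple functionals of the backlog under π̃_IQ never exceed
the same functionals under the competing schedule. The total backlog is one of them, so the
event `{s < total backlog}` under π̃_IQ is contained in the corresponding event for `Q'`. -/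

/-- The components beyond the total backlog are the minimal numbers of slots needed to empty the
queue pairs `{0, 1}` and `{1, 2}` and the whole path (`q 1 + max (q 0) (q 2)`); without them the
inequality between total backlogs is not preserved by a single step. -/
def BacklogDominated (q q' : Fin 3 → ℕ) : Prop :=
  q 0 + q 1 + q 2 ≤ q' 0 + q' 1 + q' 2 ∧
  q 0 + q 1 ≤ q' 0 + q' 1 ∧
  q 1 + q 2 ≤ q' 1 + q' 2 ∧
  q 1 + max (q 0) (q 2) ≤ q' 1 + max (q' 0) (q' 2)

theorem BacklogDominated.zero : BacklogDominated 0 0 := by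
  simp [BacklogDominated]

theorem BacklogDominated.step {q q' : Fin 3 → ℕ} (h : BacklogDominated q q') (a s : Fin 3 → ℕ)
    (hs₁ : s 0 + s 1 ≤ 1) (hs₂ : s 1 + s 2 ≤ 1) :
    BacklogDominated (fun i => q i - piIQtilde q i + a i) (fun i => q' i - s i + a i) := by
  obtain ⟨h₁, h₂, h₃, h₄⟩ := h
  unfold BacklogDominated piIQtilde
  split_ifs <;>
    simp only [Matrix.cons_val_zero, Matrix.cons_val_one, Matrix.cons_val_two,
      Matrix.head_cons, Matrix.tail_cons] <;> omega

theorem backlogDominated_of_evolution (a s q q' : ℕ → Fin 3 → ℕ)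
    (hs₁ : ∀ t, s t 0 + s t 1 ≤ 1) (hs₂ : ∀ t, s t 1 + s t 2 ≤ 1)
    (hq₀ : q 0 = 0) (hq'₀ : q' 0 = 0)
    (hq : ∀ t i, q (t + 1) i = q t i - piIQtilde (q t) i + a t i)
    (hq' : ∀ t i, q' (t + 1) i = q' t i - s t i + a t i) :
    ∀ t, BacklogDominated (q t) (q' t)
  | 0 => hq₀ ▸ hq'₀ ▸ BacklogDominated.zero
  | t + 1 => by
    rw [funext (hq t), funext (hq' t)]
    exact (backlogDominated_of_evolution a s q q' hs₁ hs₂ hq₀ hq'₀ hq hq' t).step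
      (a t) (s t) (hs₁ t) (hs₂ t)

theorem piIQtilde_uniformly_delay_optimal_general
    {Ω : Type*} [MeasurableSpace Ω] (μ : Measure Ω)
    (A : Fin 3 → ℕ → Ω → ℕ)
    (S' : ℕ → Ω → Fin 3 → ℕ)
    (hS'c1 : ∀ t ω, S' t ω 0 + S' t ω 1 ≤ 1)
    (hS'c2 : ∀ t ω, S' t ω 1 + S' t ω 2 ≤ 1)
    (Q Q' : ℕ → Fin 3 → Ω → ℕ)
    (hQ0 : ∀ i ω, Q 0 i ω = 0) (hQ'0 : ∀ i ω, Q' 0 i ω = 0)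
    (hQevol : ∀ t i ω,
      Q (t + 1) i ω = Q t i ω - piIQtilde (fun j => Q t j ω) i + A i t ω)
    (hQ'evol : ∀ t i ω, Q' (t + 1) i ω = Q' t i ω - S' t ω i + A i t ω) :
    ∀ (t : ℕ) (s : ℝ),
      μ {ω | s < ((Q t 0 ω + Q t 1 ω + Q t 2 ω : ℕ) : ℝ)}
        ≤ μ {ω | s < ((Q' t 0 ω + Q' t 1 ω + Q' t 2 ω : ℕ) : ℝ)} := by
  intro t s
  refine measure_mono fun ω (hω : s < _) => show s < _ from hω.trans_le ?_
  have hdom := backlogDominated_of_evolution (fun t i => A i t ω) (fun t => S' t ω)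
    (fun t i => Q t i ω) (fun t i => Q' t i ω) (hS'c1 · ω) (hS'c2 · ω)
    (funext (hQ0 · ω)) (funext (hQ'0 · ω)) (hQevol · · ω) (hQ'evol · · ω) t
  exact_mod_cast hdom.1

/-- Uniform delay optimality of π̃_IQ on the 3-queue path graph: if `Q` evolves under π̃_IQ
and `Q'` evolves under an arbitrary causal activation process `S'` (measurable with respect to
a randomization variable `U` independent of the arrivals together with the past arrivals, and
satisfying the path-graph interference constraints), both driven by the same arrival process
and started empty, then at every time the total backlog under π̃_IQ is stochastically smaller
than under `S'`. -/
theorem piIQtilde_uniformly_delay_optimal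
    {Ω : Type*} [MeasurableSpace Ω] (μ : Measure Ω) [IsProbabilityMeasure μ]
    (lam : Fin 3 → ℝ)
    (A : Fin 3 → ℕ → Ω → ℕ)
    (hAmeas : ∀ i t, Measurable (A i t))
    (hA01 : ∀ i t ω, A i t ω ≤ 1)
    (hArate : ∀ i t, μ {ω | A i t ω = 1} = ENNReal.ofReal (lam i))
    (hAindep : iIndepFun
      (fun p : Fin 3 × ℕ => fun ω => A p.1 p.2 ω) μ)
    {α : Type*} [MeasurableSpace α] (U : Ω → α) (hUmeas : Measurable U)
    (hUindep : IndepFun U (fun ω => fun p : Fin 3 × ℕ => A p.1 p.2 ω) μ)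
    (S' : ℕ → Ω → Fin 3 → ℕ)
    (hS'01 : ∀ t ω i, S' t ω i ≤ 1)
    (hS'c1 : ∀ t ω, S' t ω 0 + S' t ω 1 ≤ 1)
    (hS'c2 : ∀ t ω, S' t ω 1 + S' t ω 2 ≤ 1)
    (hS'causal : ∀ t, @Measurable Ω (Fin 3 → ℕ)
      (MeasurableSpace.comap U inferInstance ⊔
        ⨆ (i : Fin 3) (s : ℕ) (_ : s < t), MeasurableSpace.comap (A i s) inferInstance)
      inferInstance (S' t))
    (Q Q' : ℕ → Fin 3 → Ω → ℕ)
    (hQ0 : ∀ i ω, Q 0 i ω = 0) (hQ'0 : ∀ i ω, Q' 0 i ω = 0)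
    (hQevol : ∀ t i ω,
      Q (t + 1) i ω = Q t i ω - piIQtilde (fun j => Q t j ω) i + A i t ω)
    (hQ'evol : ∀ t i ω, Q' (t + 1) i ω = Q' t i ω - S' t ω i + A i t ω) :
    ∀ (t : ℕ) (s : ℝ),
      μ {ω | s < ((Q t 0 ω + Q t 1 ω + Q t 2 ω : ℕ) : ℝ)}
        ≤ μ {ω | s < ((Q' t 0 ω + Q' t 1 ω + Q' t 2 ω : ℕ) : ℝ)} :=
  piIQtilde_uniformly_delay_optimal_general μ A S' hS'c1 hS'c2 Q Q' hQ0 hQ'0 hQevol hQ'evol
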